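/- arXiv:1305.1338 — 6 statements merged into one kernel-verified Lean document; each statement's English description precedes it below -/
import Mathlib

section
/- Fix s1, s2 ∈ {−1, 1} and φ ∈ ℝ, and set w = cosh φ. Define for t ∈ ℝ: x(t) = (s1/2)·[ t/w + w·(tanh(φ + t) − tanh φ) ], y(t) = (s2/2)·[ t/w − w·(tanh(φ + t) − tanh φ) ], z(t) = −s1·s2·log( w / cosh(φ + t) ). Then x(0) = y(0) = z(0) = 0, and for all t: z'(t) = s1·s2·tanh(φ + t), x'(t) = (s1 / cosh(φ + t))·cosh(z(t)), and y'(t) = (s1 / cosh(φ + t))·sinh(z(t)). -/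
/-!
With `c = cosh (φ + t)` and `σ = s1 * s2 = ±1`, one has `z = σ (log c - log w)`, so `z' = σ tanh (φ + t)`,
and `exp z = (c / w) ^ σ` gives `cosh z = (c / w + w / c) / 2` and `sinh z = σ (c / w - w / c) / 2`.
Since `tanh' = 1 / cosh ^ 2`, both `x'` and `y'` are then rational identities in `c` and `w`.
-/

open Real

namespace Real

theorem hasDerivAt_tanh (x : ℝ) : HasDerivAt tanh (1 / cosh x ^ 2) x := by
  have h := (hasDerivAt_sinh x).div (hasDerivAt_cosh x) (cosh_pos x).ne'
  rw [show (sinh / cosh : ℝ → ℝ) = tanh from funext fun y => (tanh_eq_sinh_div_cosh y).symm] at h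
  refine h.congr_deriv ?_
  rw [← cosh_sq_sub_sinh_sq x]
  ring

theorem hasDerivAt_log_cosh (x : ℝ) : HasDerivAt (fun y => log (cosh y)) (tanh x) x := by
  simpa only [tanh_eq_sinh_div_cosh] using (hasDerivAt_cosh x).log (cosh_pos x).ne'

theorem cosh_mul_of_eq_neg_one_or_eq_one {k : ℝ} (hk : k = -1 ∨ k = 1) (x : ℝ) :
    cosh (k * x) = cosh x := by
  rcases hk with rfl | rfl <;> simp

theorem sinh_mul_of_eq_neg_one_or_eq_one {k : ℝ} (hk : k = -1 ∨ k = 1) (x : ℝ) :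
    sinh (k * x) = k * sinh x := by
  rcases hk with rfl | rfl <;> simp

theorem cosh_neg_mul_log_div {σ : ℝ} (hσ : σ = -1 ∨ σ = 1) {a b : ℝ} (ha : 0 < a) (hb : 0 < b) :
    cosh (-σ * log (a / b)) = (b / a + a / b) / 2 := by
  rw [neg_mul, cosh_neg, cosh_mul_of_eq_neg_one_or_eq_one hσ, cosh_log (div_pos ha hb), inv_div]
  ring

theorem sinh_neg_mul_log_div {σ : ℝ} (hσ : σ = -1 ∨ σ = 1) {a b : ℝ} (ha : 0 < a) (hb : 0 < b) :
    sinh (-σ * log (a / b)) = σ * ((b / a - a / b) / 2) := by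
  rw [neg_mul, sinh_neg, sinh_mul_of_eq_neg_one_or_eq_one hσ, sinh_log (div_pos ha hb), inv_div]
  ring

end Real

section Trajectory

variable (φ : ℝ)

theorem hasDerivAt_tanh_add_sub (t : ℝ) :
    HasDerivAt (fun t => tanh (φ + t) - tanh φ) (1 / cosh (φ + t) ^ 2) t :=
  ((hasDerivAt_tanh _).comp_const_add φ t).sub_const _

theorem hasDerivAt_neg_mul_log_div_cosh (σ : ℝ) {w : ℝ} (hw : w ≠ 0) (t : ℝ) :
    HasDerivAt (fun t => -σ * log (w / cosh (φ + t))) (σ * tanh (φ + t)) t := by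
  have h := (((hasDerivAt_log_cosh (φ + t)).comp_const_add φ t).const_sub (log w)).const_mul (-σ)
  rw [show (fun t => -σ * log (w / cosh (φ + t))) = fun t => -σ * (log w - log (cosh (φ + t)))
    from funext fun t => by rw [log_div hw (cosh_pos _).ne']]
  refine h.congr_deriv ?_
  ring

variable (w : ℝ)

theorem hasDerivAt_div_add_mul_tanh_add_sub (t : ℝ) :
    HasDerivAt (fun t => t / w + w * (tanh (φ + t) - tanh φ))
      (1 / w + w * (1 / cosh (φ + t) ^ 2)) t :=
  ((hasDerivAt_id' t).div_const w).add ((hasDerivAt_tanh_add_sub φ t).const_mul w)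

theorem hasDerivAt_div_sub_mul_tanh_add_sub (t : ℝ) :
    HasDerivAt (fun t => t / w - w * (tanh (φ + t) - tanh φ))
      (1 / w - w * (1 / cosh (φ + t) ^ 2)) t :=
  ((hasDerivAt_id' t).div_const w).sub ((hasDerivAt_tanh_add_sub φ t).const_mul w)

end Trajectory

theorem extremal_trajectories_case3
    (s1 s2 : ℝ) (hs1 : s1 = -1 ∨ s1 = 1) (hs2 : s2 = -1 ∨ s2 = 1)
    (φ : ℝ) (w : ℝ) (hw : w = Real.cosh φ)
    (x y z : ℝ → ℝ)
    (hx : ∀ t, x t = (s1 / 2) * (t / w + w * (Real.tanh (φ + t) - Real.tanh φ)))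
    (hy : ∀ t, y t = (s2 / 2) * (t / w - w * (Real.tanh (φ + t) - Real.tanh φ)))
    (hz : ∀ t, z t = -(s1 * s2) * Real.log (w / Real.cosh (φ + t))) :
    x 0 = 0 ∧ y 0 = 0 ∧ z 0 = 0 ∧
    (∀ t, HasDerivAt z (s1 * s2 * Real.tanh (φ + t)) t) ∧
    (∀ t, HasDerivAt x ((s1 / Real.cosh (φ + t)) * Real.cosh (z t)) t) ∧
    (∀ t, HasDerivAt y ((s1 / Real.cosh (φ + t)) * Real.sinh (z t)) t) := by
  subst hw
  obtain rfl : x = _ := funext hx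
  obtain rfl : y = _ := funext hy
  obtain rfl : z = _ := funext hz
  have hcosh : 0 < cosh φ := cosh_pos φ
  have hσ : s1 * s2 = -1 ∨ s1 * s2 = 1 := by
    rcases hs1 with rfl | rfl <;> rcases hs2 with rfl | rfl <;> norm_num
  have hs1_sq : s1 ^ 2 = 1 := by rcases hs1 with rfl | rfl <;> norm_num
  refine ⟨by simp, by simp, by simp [hcosh.ne'],
    hasDerivAt_neg_mul_log_div_cosh φ _ hcosh.ne', fun t => ?_, fun t => ?_⟩
  · refine ((hasDerivAt_div_add_mul_tanh_add_sub φ _ t).const_mul (s1 / 2)).congr_deriv ?_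
    rw [cosh_neg_mul_log_div hσ hcosh (cosh_pos _)]
    field_simp
  · refine ((hasDerivAt_div_sub_mul_tanh_add_sub φ _ t).const_mul (s2 / 2)).congr_deriv ?_
    rw [sinh_neg_mul_log_div hσ hcosh (cosh_pos _)]
    field_simp
    linear_combination (cosh φ ^ 2 - cosh (φ + t) ^ 2) * s2 * hs1_sq
end

section
/- Let γ : ℝ → ℝ be differentiable and let x, y, z : ℝ → ℝ satisfy x' = cos(γ/2)·cosh z, y' = cos(γ/2)·sinh z, z' = sin(γ/2). Then x and y are twice differentiable and for all t: x'(t)·y''(t) − x''(t)·y'(t) = sin(γ(t)/2)·cos²(γ(t)/2) and x'(t)² + y'(t)² = cos²(γ(t)/2)·cosh(2·z(t)). Consequently, at any t with cos(γ(t)/2) > 0, the signed curvature κ = (x'y'' − x''y')/(x'² + y'²)^{3/2} of the plane curve (x, y) equals sin(γ/2) / ( cos(γ/2)·(cosh 2z)^{3/2} ). -/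
open Real

/-! The velocity of the projection has the form `c • (cosh z, sinh z)` with `c = cos (γ/2)`.
Because `cosh² - sinh² = 1`, the cross product of such a velocity with its derivative sees only
`z`: the `c'`-terms cancel and `x'y'' - x''y' = c² z'`, while `x'² + y'² = c² cosh 2z`. For `c > 0`,
`(c² cosh 2z)^{3/2} = c³ (cosh 2z)^{3/2}` then gives the curvature. -/

lemma hasDerivAt_deriv_of_forall_hasDerivAt {f f' : ℝ → ℝ} {f'' t : ℝ}
    (hf : ∀ t, HasDerivAt f (f' t) t) (hf' : HasDerivAt f' f'' t) :
    HasDerivAt (deriv f) f'' t := by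
  rwa [show deriv f = f' from funext fun t => (hf t).deriv]

lemma sq_mul_cosh_add_sq_mul_sinh (c z : ℝ) :
    (c * cosh z) ^ 2 + (c * sinh z) ^ 2 = c ^ 2 * cosh (2 * z) := by
  rw [cosh_two_mul]
  ring

section HyperbolicPolarForm

variable {x y c c' z w : ℝ → ℝ}

lemma hasDerivAt_deriv_of_mul_cosh (hx : ∀ t, HasDerivAt x (c t * cosh (z t)) t)
    (hc : ∀ t, HasDerivAt c (c' t) t) (hz : ∀ t, HasDerivAt z (w t) t) (t : ℝ) :
    HasDerivAt (deriv x) (c' t * cosh (z t) + c t * (sinh (z t) * w t)) t :=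
  hasDerivAt_deriv_of_forall_hasDerivAt hx ((hc t).mul (hz t).cosh)

lemma hasDerivAt_deriv_of_mul_sinh (hy : ∀ t, HasDerivAt y (c t * sinh (z t)) t)
    (hc : ∀ t, HasDerivAt c (c' t) t) (hz : ∀ t, HasDerivAt z (w t) t) (t : ℝ) :
    HasDerivAt (deriv y) (c' t * sinh (z t) + c t * (cosh (z t) * w t)) t :=
  hasDerivAt_deriv_of_forall_hasDerivAt hy ((hc t).mul (hz t).sinh)

lemma deriv_mul_deriv_deriv_sub_of_hyperbolic
    (hx : ∀ t, HasDerivAt x (c t * cosh (z t)) t) (hy : ∀ t, HasDerivAt y (c t * sinh (z t)) t)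
    (hc : ∀ t, HasDerivAt c (c' t) t) (hz : ∀ t, HasDerivAt z (w t) t) (t : ℝ) :
    deriv x t * deriv (deriv y) t - deriv (deriv x) t * deriv y t = c t ^ 2 * w t := by
  rw [(hx t).deriv, (hy t).deriv, (hasDerivAt_deriv_of_mul_cosh hx hc hz t).deriv,
    (hasDerivAt_deriv_of_mul_sinh hy hc hz t).deriv]
  linear_combination c t ^ 2 * w t * cosh_sq_sub_sinh_sq (z t)

lemma deriv_sq_add_deriv_sq_of_hyperbolic
    (hx : ∀ t, HasDerivAt x (c t * cosh (z t)) t) (hy : ∀ t, HasDerivAt y (c t * sinh (z t)) t)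
    (t : ℝ) :
    deriv x t ^ 2 + deriv y t ^ 2 = c t ^ 2 * cosh (2 * z t) := by
  rw [(hx t).deriv, (hy t).deriv, sq_mul_cosh_add_sq_mul_sinh]

end HyperbolicPolarForm

lemma sq_mul_rpow_three_halves {c C : ℝ} (hc : 0 ≤ c) (hC : 0 ≤ C) :
    (c ^ 2 * C) ^ ((3 : ℝ) / 2) = c ^ 3 * C ^ ((3 : ℝ) / 2) := by
  rw [mul_rpow (by positivity) hC, ← rpow_natCast c 2, ← rpow_mul hc]
  norm_num

theorem curvature_of_xy_projection
    (γ x y z : ℝ → ℝ)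
    (hγ : Differentiable ℝ γ)
    (hx : ∀ t, HasDerivAt x (Real.cos (γ t / 2) * Real.cosh (z t)) t)
    (hy : ∀ t, HasDerivAt y (Real.cos (γ t / 2) * Real.sinh (z t)) t)
    (hz : ∀ t, HasDerivAt z (Real.sin (γ t / 2)) t) :
    Differentiable ℝ x ∧ Differentiable ℝ y ∧
    Differentiable ℝ (deriv x) ∧ Differentiable ℝ (deriv y) ∧
    (∀ t, deriv x t * deriv (deriv y) t - deriv (deriv x) t * deriv y t =
        Real.sin (γ t / 2) * Real.cos (γ t / 2) ^ 2) ∧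
    (∀ t, deriv x t ^ 2 + deriv y t ^ 2 =
        Real.cos (γ t / 2) ^ 2 * Real.cosh (2 * z t)) ∧
    (∀ t, 0 < Real.cos (γ t / 2) →
      (deriv x t * deriv (deriv y) t - deriv (deriv x) t * deriv y t) /
          (deriv x t ^ 2 + deriv y t ^ 2) ^ ((3 : ℝ) / 2) =
        Real.sin (γ t / 2) /
          (Real.cos (γ t / 2) * Real.cosh (2 * z t) ^ ((3 : ℝ) / 2))) := by
  have hc : ∀ t, HasDerivAt (fun t => cos (γ t / 2)) (-sin (γ t / 2) * (deriv γ t / 2)) t :=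
    fun t => ((hγ t).hasDerivAt.div_const 2).cos
  have hcross : ∀ t, deriv x t * deriv (deriv y) t - deriv (deriv x) t * deriv y t =
      sin (γ t / 2) * cos (γ t / 2) ^ 2 := fun t => by
    rw [deriv_mul_deriv_deriv_sub_of_hyperbolic hx hy hc hz t, mul_comm]
  have hspeed := deriv_sq_add_deriv_sq_of_hyperbolic hx hy
  refine ⟨fun t => (hx t).differentiableAt, fun t => (hy t).differentiableAt,
    fun t => (hasDerivAt_deriv_of_mul_cosh hx hc hz t).differentiableAt,
    fun t => (hasDerivAt_deriv_of_mul_sinh hy hc hz t).differentiableAt, hcross, hspeed, ?_⟩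
  intro t hcos
  have hcosh : 0 < cosh (2 * z t) ^ ((3 : ℝ) / 2) := rpow_pos_of_pos (cosh_pos _) _
  rw [hcross, hspeed, sq_mul_rpow_three_halves hcos.le (cosh_pos _).le]
  field_simp
end

section
/- Let t > 0, let γ : [0, t] → ℝ be continuous, and let x, y, z : [0, t] → ℝ satisfy x' = cos(γ/2)·cosh z, y' = cos(γ/2)·sinh z, z' = sin(γ/2) on [0, t]. Define for s ∈ [0, t]: γ¹(s) = γ(t − s), z¹(s) = z(t) − z(t − s), x¹(s) = cosh(z(t))·(x(t) − x(t − s)) − sinh(z(t))·(y(t) − y(t − s)), y¹(s) = sinh(z(t))·(x(t) − x(t − s)) − cosh(z(t))·(y(t) − y(t − s)). Then x¹(0) = y¹(0) = z¹(0) = 0 and on [0, t]: (x¹)' = cos(γ¹/2)·cosh z¹, (y¹)' = cos(γ¹/2)·sinh z¹, (z¹)' = sin(γ¹/2). -/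
open Real

/-! Reading the trajectory backwards from its endpoint gives the increments
`x t - x (t - s)`, …, whose velocity at `s` is the original velocity at `t - s`: the reversal of
time and the sign of the increment cancel. Translating the endpoint to the identity acts on `(x, y)`
as the hyperbolic rotation by `-z t`, and the subtraction formulas for `cosh` and `sinh` turn the
rotated velocity back into the horizontal system driven by `γ (t - s)` with height `z t - z (t - s)`. -/

theorem HasDerivAt.sub_comp_const_sub {𝕜 F : Type*} [NontriviallyNormedField 𝕜]
    [NormedAddCommGroup F] [NormedSpace 𝕜 F] {f : 𝕜 → F} {f' : F} {a x : 𝕜}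
    (hf : HasDerivAt f f' (a - x)) : HasDerivAt (fun u => f a - f (a - u)) f' x := by
  simpa using (hf.comp_const_sub a x).const_sub (f a)

theorem horizontal_reflection_eps1_general
    (t : ℝ) (γ : ℝ → ℝ)
    (x y z : ℝ → ℝ)
    (hx : ∀ s ∈ Set.Icc 0 t, HasDerivAt x (Real.cos (γ s / 2) * Real.cosh (z s)) s)
    (hy : ∀ s ∈ Set.Icc 0 t, HasDerivAt y (Real.cos (γ s / 2) * Real.sinh (z s)) s)
    (hz : ∀ s ∈ Set.Icc 0 t, HasDerivAt z (Real.sin (γ s / 2)) s)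
    (γ1 x1 y1 z1 : ℝ → ℝ)
    (hγ1 : ∀ s, γ1 s = γ (t - s))
    (hz1 : ∀ s, z1 s = z t - z (t - s))
    (hx1 : ∀ s, x1 s = Real.cosh (z t) * (x t - x (t - s)) -
        Real.sinh (z t) * (y t - y (t - s)))
    (hy1 : ∀ s, y1 s = Real.sinh (z t) * (x t - x (t - s)) -
        Real.cosh (z t) * (y t - y (t - s))) :
    x1 0 = 0 ∧ y1 0 = 0 ∧ z1 0 = 0 ∧
    (∀ s ∈ Set.Icc 0 t, HasDerivAt x1 (Real.cos (γ1 s / 2) * Real.cosh (z1 s)) s) ∧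
    (∀ s ∈ Set.Icc 0 t, HasDerivAt y1 (Real.cos (γ1 s / 2) * Real.sinh (z1 s)) s) ∧
    (∀ s ∈ Set.Icc 0 t, HasDerivAt z1 (Real.sin (γ1 s / 2)) s) := by
  obtain rfl : γ1 = fun s => γ (t - s) := funext hγ1
  obtain rfl : z1 = fun s => z t - z (t - s) := funext hz1
  obtain rfl : x1 = fun s => cosh (z t) * (x t - x (t - s)) - sinh (z t) * (y t - y (t - s)) :=
    funext hx1
  obtain rfl : y1 = fun s => sinh (z t) * (x t - x (t - s)) - cosh (z t) * (y t - y (t - s)) :=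
    funext hy1
  have reflect_mem : ∀ s ∈ Set.Icc 0 t, t - s ∈ Set.Icc 0 t := fun s hs =>
    ⟨by linarith [hs.2], by linarith [hs.1]⟩
  refine ⟨by simp, by simp, by simp, fun s hs => ?_, fun s hs => ?_, fun s hs => ?_⟩
  · have hx' := (hx _ (reflect_mem s hs)).sub_comp_const_sub
    have hy' := (hy _ (reflect_mem s hs)).sub_comp_const_sub
    refine ((hx'.const_mul (cosh (z t))).sub (hy'.const_mul (sinh (z t)))).congr_deriv ?_
    rw [cosh_sub]
    ring
  · have hx' := (hx _ (reflect_mem s hs)).sub_comp_const_sub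
    have hy' := (hy _ (reflect_mem s hs)).sub_comp_const_sub
    refine ((hx'.const_mul (sinh (z t))).sub (hy'.const_mul (cosh (z t)))).congr_deriv ?_
    rw [sinh_sub]
    ring
  · exact (hz _ (reflect_mem s hs)).sub_comp_const_sub

theorem horizontal_reflection_eps1
    (t : ℝ) (ht : 0 < t) (γ : ℝ → ℝ) (hγcont : Continuous γ)
    (x y z : ℝ → ℝ)
    (hx : ∀ s ∈ Set.Icc 0 t, HasDerivAt x (Real.cos (γ s / 2) * Real.cosh (z s)) s)
    (hy : ∀ s ∈ Set.Icc 0 t, HasDerivAt y (Real.cos (γ s / 2) * Real.sinh (z s)) s)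
    (hz : ∀ s ∈ Set.Icc 0 t, HasDerivAt z (Real.sin (γ s / 2)) s)
    (γ1 x1 y1 z1 : ℝ → ℝ)
    (hγ1 : ∀ s, γ1 s = γ (t - s))
    (hz1 : ∀ s, z1 s = z t - z (t - s))
    (hx1 : ∀ s, x1 s = Real.cosh (z t) * (x t - x (t - s)) -
        Real.sinh (z t) * (y t - y (t - s)))
    (hy1 : ∀ s, y1 s = Real.sinh (z t) * (x t - x (t - s)) -
        Real.cosh (z t) * (y t - y (t - s))) :
    x1 0 = 0 ∧ y1 0 = 0 ∧ z1 0 = 0 ∧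
    (∀ s ∈ Set.Icc 0 t, HasDerivAt x1 (Real.cos (γ1 s / 2) * Real.cosh (z1 s)) s) ∧
    (∀ s ∈ Set.Icc 0 t, HasDerivAt y1 (Real.cos (γ1 s / 2) * Real.sinh (z1 s)) s) ∧
    (∀ s ∈ Set.Icc 0 t, HasDerivAt z1 (Real.sin (γ1 s / 2)) s) :=
  horizontal_reflection_eps1_general t γ x y z hx hy hz γ1 x1 y1 z1 hγ1 hz1 hx1 hy1
end

section
/- Let γ : ℝ → ℝ be continuous and let x, y, z : ℝ → ℝ satisfy x' = cos(γ/2)·cosh z, y' = cos(γ/2)·sinh z, z' = sin(γ/2) with x(0) = y(0) = z(0) = 0. Then: (a) with γ³ = −γ, the curve (x³, y³, z³) = (x, −y, −z) satisfies (x³)' = cos(γ³/2)·cosh z³, (y³)' = cos(γ³/2)·sinh z³, (z³)' = sin(γ³/2) with (x³, y³, z³)(0) = (0,0,0); and (b) with γ⁷ = −γ + 2π, the curve (x⁷, y⁷, z⁷) = (−x, −y, z) satisfies (x⁷)' = cos(γ⁷/2)·cosh z⁷, (y⁷)' = cos(γ⁷/2)·sinh z⁷, (z⁷)' = sin(γ⁷/2)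 with (x⁷, y⁷, z⁷)(0) = (0,0,0). -/
open Real

/-
Both reflections only change signs: `ε³` flips `γ`, and `cos (θ/2)` is even while `sin (θ/2)`
and `sinh` are odd, so negating `y` and `z` keeps the system; `ε⁷` replaces `θ/2` by `π - θ/2`,
which flips `cos (θ/2)` and fixes `sin (θ/2)`, so negating `x` and `y` keeps it.
-/

def IsHorizontalCurve (γ x y z : ℝ → ℝ) : Prop :=
  ∀ t, HasDerivAt x (cos (γ t / 2) * cosh (z t)) t ∧
    HasDerivAt y (cos (γ t / 2) * sinh (z t)) t ∧
    HasDerivAt z (sin (γ t / 2)) t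

lemma cos_neg_add_two_pi_div_two (θ : ℝ) : cos ((-θ + 2 * π) / 2) = -cos (θ / 2) := by
  rw [show (-θ + 2 * π) / 2 = π - θ / 2 by ring, cos_pi_sub]

lemma sin_neg_add_two_pi_div_two (θ : ℝ) : sin ((-θ + 2 * π) / 2) = sin (θ / 2) := by
  rw [show (-θ + 2 * π) / 2 = π - θ / 2 by ring, sin_pi_sub]

namespace IsHorizontalCurve

variable {γ x y z : ℝ → ℝ}

theorem reflect_eps3 (h : IsHorizontalCurve γ x y z) : IsHorizontalCurve (-γ) x (-y) (-z) := by
  intro t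
  obtain ⟨hx, hy, hz⟩ := h t
  simp only [Pi.neg_apply, neg_div, cos_neg, sin_neg, cosh_neg, sinh_neg, mul_neg]
  exact ⟨hx, hy.neg, hz.neg⟩

theorem reflect_eps7 (h : IsHorizontalCurve γ x y z) :
    IsHorizontalCurve (fun t => -γ t + 2 * π) (-x) (-y) z := by
  intro t
  obtain ⟨hx, hy, hz⟩ := h t
  simp only [cos_neg_add_two_pi_div_two, sin_neg_add_two_pi_div_two, neg_mul]
  exact ⟨hx.neg, hy.neg, hz⟩

end IsHorizontalCurve

theorem horizontal_reflections_eps3_eps7_general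
    (γ : ℝ → ℝ)
    (x y z : ℝ → ℝ)
    (hx : ∀ t, HasDerivAt x (Real.cos (γ t / 2) * Real.cosh (z t)) t)
    (hy : ∀ t, HasDerivAt y (Real.cos (γ t / 2) * Real.sinh (z t)) t)
    (hz : ∀ t, HasDerivAt z (Real.sin (γ t / 2)) t)
    (hx0 : x 0 = 0) (hy0 : y 0 = 0) (hz0 : z 0 = 0) :
    ((∀ t, HasDerivAt x (Real.cos (-γ t / 2) * Real.cosh (-z t)) t) ∧
     (∀ t, HasDerivAt (fun s => -y s) (Real.cos (-γ t / 2) * Real.sinh (-z t)) t) ∧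
     (∀ t, HasDerivAt (fun s => -z s) (Real.sin (-γ t / 2)) t) ∧
     x 0 = 0 ∧ -y 0 = 0 ∧ -z 0 = 0) ∧
    ((∀ t, HasDerivAt (fun s => -x s) (Real.cos ((-γ t + 2 * Real.pi) / 2) * Real.cosh (z t)) t) ∧
     (∀ t, HasDerivAt (fun s => -y s) (Real.cos ((-γ t + 2 * Real.pi) / 2) * Real.sinh (z t)) t) ∧
     (∀ t, HasDerivAt z (Real.sin ((-γ t + 2 * Real.pi) / 2)) t) ∧
     -x 0 = 0 ∧ -y 0 = 0 ∧ z 0 = 0) := by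
  have h : IsHorizontalCurve γ x y z := fun t => ⟨hx t, hy t, hz t⟩
  have h3 := h.reflect_eps3
  have h7 := h.reflect_eps7
  exact ⟨⟨fun t => (h3 t).1, fun t => (h3 t).2.1, fun t => (h3 t).2.2,
      hx0, by simp [hy0], by simp [hz0]⟩,
    ⟨fun t => (h7 t).1, fun t => (h7 t).2.1, fun t => (h7 t).2.2,
      by simp [hx0], by simp [hy0], hz0⟩⟩

theorem horizontal_reflections_eps3_eps7
    (γ : ℝ → ℝ) (hγcont : Continuous γ)
    (x y z : ℝ → ℝ)
    (hx : ∀ t, HasDerivAt x (Real.cos (γ t / 2) * Real.cosh (z t)) t)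
    (hy : ∀ t, HasDerivAt y (Real.cos (γ t / 2) * Real.sinh (z t)) t)
    (hz : ∀ t, HasDerivAt z (Real.sin (γ t / 2)) t)
    (hx0 : x 0 = 0) (hy0 : y 0 = 0) (hz0 : z 0 = 0) :
    ((∀ t, HasDerivAt x (Real.cos (-γ t / 2) * Real.cosh (-z t)) t) ∧
     (∀ t, HasDerivAt (fun s => -y s) (Real.cos (-γ t / 2) * Real.sinh (-z t)) t) ∧
     (∀ t, HasDerivAt (fun s => -z s) (Real.sin (-γ t / 2)) t) ∧
     x 0 = 0 ∧ -y 0 = 0 ∧ -z 0 = 0) ∧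
    ((∀ t, HasDerivAt (fun s => -x s) (Real.cos ((-γ t + 2 * Real.pi) / 2) * Real.cosh (z t)) t) ∧
     (∀ t, HasDerivAt (fun s => -y s) (Real.cos ((-γ t + 2 * Real.pi) / 2) * Real.sinh (z t)) t) ∧
     (∀ t, HasDerivAt z (Real.sin ((-γ t + 2 * Real.pi) / 2)) t) ∧
     -x 0 = 0 ∧ -y 0 = 0 ∧ z 0 = 0) :=
  horizontal_reflections_eps3_eps7_general γ x y z hx hy hz hx0 hy0 hz0
end

section
/- For (x, y, z) ∈ ℝ³, the two equations x·cosh z − y·sinh z = x and x·sinh z − y·cosh z = y hold simultaneously if and only if R₁(x,y,z) := y·cosh(z/2) − x·sinh(z/2) = 0. -/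
/-!
Writing `c = cosh (z/2)`, `s = sinh (z/2)`, the double-angle formulas `cosh z = c² + s²`,
`sinh z = 2sc` together with `c² - s² = 1` turn the two fixed-point defects into
`-2s · R₁` and `-2c · R₁`. Since `c > 0`, the second vanishes exactly when `R₁` does, and then so
does the first.
-/

open Real

lemma cosh_eq_cosh_half_sq_add_sinh_half_sq (z : ℝ) :
    cosh z = cosh (z / 2) ^ 2 + sinh (z / 2) ^ 2 := by
  rw [← cosh_two_mul, mul_div_cancel₀ z two_ne_zero]

lemma sinh_eq_two_mul_sinh_half_mul_cosh_half (z : ℝ) :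
    sinh z = 2 * sinh (z / 2) * cosh (z / 2) := by
  rw [← sinh_two_mul, mul_div_cancel₀ z two_ne_zero]

lemma mul_cosh_sub_mul_sinh_sub_self (x y z : ℝ) :
    x * cosh z - y * sinh z - x =
      -2 * sinh (z / 2) * (y * cosh (z / 2) - x * sinh (z / 2)) := by
  rw [cosh_eq_cosh_half_sq_add_sinh_half_sq z, sinh_eq_two_mul_sinh_half_mul_cosh_half z]
  linear_combination x * cosh_sq_sub_sinh_sq (z / 2)

lemma mul_sinh_sub_mul_cosh_sub_self (x y z : ℝ) :
    x * sinh z - y * cosh z - y =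
      -2 * cosh (z / 2) * (y * cosh (z / 2) - x * sinh (z / 2)) := by
  rw [cosh_eq_cosh_half_sq_add_sinh_half_sq z, sinh_eq_two_mul_sinh_half_mul_cosh_half z]
  linear_combination y * cosh_sq_sub_sinh_sq (z / 2)

theorem fixed_points_eps1_iff_R1_zero (x y z : ℝ) :
    (x * Real.cosh z - y * Real.sinh z = x ∧
     x * Real.sinh z - y * Real.cosh z = y) ↔
    y * Real.cosh (z / 2) - x * Real.sinh (z / 2) = 0 := by
  rw [← sub_eq_zero, mul_cosh_sub_mul_sinh_sub_self, ← sub_eq_zero (a := x * sinh z - _),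
    mul_sinh_sub_mul_cosh_sub_self]
  have hc : cosh (z / 2) ≠ 0 := (cosh_pos _).ne'
  constructor
  · rintro ⟨-, h⟩
    simpa [hc] using h
  · intro h
    simp [h]
end

section
/- For (x, y, z) ∈ ℝ³, the two equations −x·cosh z + y·sinh z = x and −x·sinh z + y·cosh z = y hold simultaneously if and only if R₂(x,y,z) := x·cosh(z/2) − y·sinh(z/2) = 0. -/
open Real

/-
With `w = z / 2`, the double-angle formulas factor both defect equations through
`R₂ = x cosh w - y sinh w`: the first defect is `-2 cosh w · R₂` and the second `-2 sinh w · R₂`.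
Since `cosh w > 0`, the first equation alone already forces `R₂ = 0`, which in turn gives both.
-/

lemma neg_mul_cosh_two_mul_add_mul_sinh_two_mul_sub (x y w : ℝ) :
    -x * cosh (2 * w) + y * sinh (2 * w) - x = -2 * cosh w * (x * cosh w - y * sinh w) := by
  rw [cosh_two_mul, sinh_two_mul]
  linear_combination x * cosh_sq w

lemma neg_mul_sinh_two_mul_add_mul_cosh_two_mul_sub (x y w : ℝ) :
    -x * sinh (2 * w) + y * cosh (2 * w) - y = -2 * sinh w * (x * cosh w - y * sinh w) := by
  rw [cosh_two_mul, sinh_two_mul]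
  linear_combination y * cosh_sq w

theorem fixed_points_eps6_iff_R2_zero (x y z : ℝ) :
    (-x * Real.cosh z + y * Real.sinh z = x ∧
     -x * Real.sinh z + y * Real.cosh z = y) ↔
    x * Real.cosh (z / 2) - y * Real.sinh (z / 2) = 0 := by
  have h₁ := neg_mul_cosh_two_mul_add_mul_sinh_two_mul_sub x y (z / 2)
  have h₂ := neg_mul_sinh_two_mul_add_mul_cosh_two_mul_sub x y (z / 2)
  rw [mul_div_cancel₀ z two_ne_zero] at h₁ h₂
  constructor
  · rintro ⟨hx, -⟩
    have hR : cosh (z / 2) * (x * cosh (z / 2) - y * sinh (z / 2)) = 0 := by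
      linear_combination (h₁ - hx) / 2
    exact (mul_eq_zero.1 hR).resolve_left (cosh_pos _).ne'
  · intro hR
    constructor
    · linear_combination h₁ - 2 * cosh (z / 2) * hR
    · linear_combination h₂ - 2 * sinh (z / 2) * hR
end
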